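/- Let R > 0, c ∈ ℝ, α∞ ∈ ℂ with Re α∞ ≥ 0 and α∞ ≠ 0. Define for t ∈ ℝ the function Σ₀(t) = (t + α∞ c)² + (α∞² − 1) R². If |α∞| ≠ 1 or Im α∞ ≠ 0, then for t ≥ r := sqrt(R² + c²) with c ≥ 0 one has Σ₀(t) ≠ 0 whenever Re α∞ > 0, so the kernel 1/sqrt((t + α∞ c)² + (α∞² − 1)R²) appearing in the time-domain half-space Green's function is well defined for t ≥ r. -/

import Mathlib

/-! Viewed as a polynomial in `αinf`, `Σ₀(t) = r² αinf² + 2tc αinf + (t² - R²)` with `r² = R² + c²`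
is a real quadratic whose discriminant `4R²(r² - t²)` is nonpositive for `t ≥ r`. Its roots are
therefore complex conjugates (or a double real root) with real part `-tc / r² ≤ 0`, so no `αinf`
with positive real part is a root. -/

theorem Complex.re_eq_of_quadratic_eq_zero {p q s : ℝ} (hp : 0 < p) (hdisc : discrim p q s ≤ 0)
    {z : ℂ} (hz : p * z ^ 2 + q * z + s = 0) : z.re = -q / (2 * p) := by
  have hre : p * (z.re ^ 2 - z.im ^ 2) + q * z.re + s = 0 := by
    simpa [sq] using congrArg Complex.re hz
  have him : z.im * (2 * p * z.re + q) = 0 := by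
    have := congrArg Complex.im hz
    simp only [sq, Complex.add_im, Complex.mul_im, Complex.ofReal_re, Complex.ofReal_im,
      Complex.zero_im] at this
    linarith
  have hvertex : 2 * p * z.re + q = 0 := by
    rcases mul_eq_zero.mp him with hy | h
    · rw [hy] at hre
      -- `(2pz + q)² = discrim p q s ≤ 0` for a real root `z`
      unfold discrim at hdisc
      nlinarith [sq_nonneg (2 * p * z.re + q)]
    · exact h
  field_simp
  linarith

theorem stmt12_general (R c : ℝ) (hR : 0 < R) (hc : 0 ≤ c) (αinf : ℂ)
    (hα : 0 < αinf.re) :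
    ∀ t : ℝ, Real.sqrt (R ^ 2 + c ^ 2) ≤ t →
      ((t : ℂ) + αinf * c) ^ 2 + (αinf ^ 2 - 1) * (R : ℂ) ^ 2 ≠ 0 := by
  intro t ht hzero
  have hr2 : 0 < R ^ 2 + c ^ 2 := by positivity
  have ht0 : 0 ≤ t := (Real.sqrt_nonneg _).trans ht
  have ht2 : R ^ 2 + c ^ 2 ≤ t ^ 2 := (Real.sqrt_le_left ht0).mp ht
  have hquad : ((R ^ 2 + c ^ 2 : ℝ) : ℂ) * αinf ^ 2 + ((2 * t * c : ℝ) : ℂ) * αinf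
      + ((t ^ 2 - R ^ 2 : ℝ) : ℂ) = 0 := by
    rw [← hzero]; push_cast; ring
  have hdisc : discrim (R ^ 2 + c ^ 2) (2 * t * c) (t ^ 2 - R ^ 2) ≤ 0 := by
    unfold discrim; nlinarith [mul_nonneg (sq_nonneg R) (sub_nonneg.mpr ht2)]
  have hre := Complex.re_eq_of_quadratic_eq_zero hr2 hdisc hquad
  have : -(2 * t * c) / (2 * (R ^ 2 + c ^ 2)) ≤ 0 :=
    div_nonpos_of_nonpos_of_nonneg (by nlinarith) (by positivity)
  linarith

/-- Non-vanishing of the expression under the square root in Ochmann's time-domain Green's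
function: for R > 0, c ≥ 0, Re αinf > 0, αinf ≠ 0, and (|αinf| ≠ 1 or Im αinf ≠ 0),
Σ₀(t) = (t + αinf·c)² + (αinf² − 1)R² ≠ 0 for all t ≥ √(R² + c²). -/
theorem stmt12 (R c : ℝ) (hR : 0 < R) (hc : 0 ≤ c) (αinf : ℂ)
    (hα : 0 < αinf.re) (hα0 : αinf ≠ 0)
    (hnd : ‖αinf‖ ≠ 1 ∨ αinf.im ≠ 0) :
    ∀ t : ℝ, Real.sqrt (R ^ 2 + c ^ 2) ≤ t →
      ((t : ℂ) + αinf * c) ^ 2 + (αinf ^ 2 - 1) * (R : ℂ) ^ 2 ≠ 0 :=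
  stmt12_general R c hR hc αinf hα
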